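/- Let $(X_i)$ be i.i.d. with law $\alpha$, and let $W, W' : S^k \to \mathbb{R}$ be symmetric measurable functions such that $\mathbb{E}[\exp(\lambda |W - W'|(X_1,\ldots,X_k))] < \infty$ for all $\lambda > 0$. Then for every $\delta, \lambda > 0$, $\frac{1}{n} \log \mathbb{P}\{ |U_n(W) - U_n(W')| > \delta \} \le -\lambda \delta + \frac{1}{k} \log \mathbb{E}[\exp(k C_k \lambda |W - W'|(X_1,\ldots,X_k))]$ for all $n \ge k$. -/

import Mathlib

open MeasureTheory ProbabilityTheory Real Filter Topology

/-- The `U`-statistic of order `k` for the kernel `Φ` and sample `x 0, …, x (n-1)`. -/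
noncomputable def UStat {S : Type*} (k n : ℕ) (Φ : (Fin k → S) → ℝ) (x : ℕ → S) : ℝ :=
  ((n.descFactorial k : ℝ))⁻¹ * ∑ e : Fin k ↪ Fin n, Φ (fun j => x (e j))

/-- The de la Peña decoupling constants: `C₂ = 8` and `C_k = 2^k ∏_{j=2}^k (j^j - 1)` for
`k > 2`. -/
noncomputable def Cdec (k : ℕ) : ℝ :=
  if k = 2 then 8 else 2 ^ k * ∏ j ∈ Finset.Icc 2 k, ((j : ℝ) ^ j - 1)

/-!
Hoeffding's block representation: with `m = ⌊n/k⌋` disjoint blocks of size `k`, `U_n(Φ)` is the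
average over all permutations `σ` of `(1/m) ∑ᵢ Φ(X_{σ(block i)})`, a mean of `m` i.i.d. copies of
`Φ(X₁, …, X_k)`. By Jensen, `E exp(t U_n(Φ)) ≤ (E exp((t/m) Φ(X₁, …, X_k)))^m`. Apply this to
`Φ = |W - W'|`, which dominates `|U_n(W) - U_n(W')|`, with `t = nλ`: since `n/m ≤ 2k ≤ k C_k` and
`m/n ≤ 1/k`, the exponential Chebyshev inequality gives the bound.
-/

open scoped ENNReal

namespace MulAction

variable {G X M : Type*} [Group G] [MulAction G X] [Fintype G] [AddCommMonoid M]

theorem sum_smul_eq_sum_smul_of_isPretransitive [IsPretransitive G X] (F : X → M) (x y : X) :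
    ∑ g : G, F (g • y) = ∑ g : G, F (g • x) := by
  obtain ⟨h, rfl⟩ := exists_smul_eq G x y
  simp_rw [smul_smul]
  exact Fintype.sum_equiv (Equiv.mulRight h) _ _ fun _ => rfl

theorem card_nsmul_sum_smul [Fintype X] [IsPretransitive G X] (F : X → M) (x : X) :
    Fintype.card X • ∑ g : G, F (g • x) = Fintype.card G • ∑ y, F y := by
  calc Fintype.card X • ∑ g : G, F (g • x) = ∑ y : X, ∑ g : G, F (g • y) := by
        simp [sum_smul_eq_sum_smul_of_isPretransitive F x]
    _ = ∑ g : G, ∑ y, F (g • y) := Finset.sum_comm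
    _ = Fintype.card G • ∑ y, F y := by
        simp [fun g : G => Fintype.sum_equiv (MulAction.toPerm g) (fun y => F (g • y)) F
          fun _ => rfl]

end MulAction

instance {α β : Type*} [Finite α] : MulAction.IsPretransitive (Equiv.Perm β) (α ↪ β) :=
  ⟨Equiv.Perm.exists_smul_eq_embedding⟩

theorem UStat_eq_average_perm {S : Type*} {k n m : ℕ} (hm : m ≠ 0)
    (blk : Fin m → (Fin k ↪ Fin n)) (Φ : (Fin k → S) → ℝ) (x : ℕ → S) :
    UStat k n Φ x = (n.factorial : ℝ)⁻¹ *
      ∑ σ : Equiv.Perm (Fin n), (m : ℝ)⁻¹ * ∑ i, Φ (fun j => x (σ (blk i j))) := by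
  have : NeZero m := ⟨hm⟩
  have hcard : (n.descFactorial k : ℝ) ≠ 0 := by
    have := Fintype.card_pos_iff.2 ⟨blk 0⟩
    rw [Fintype.card_embedding_eq, Fintype.card_fin, Fintype.card_fin] at this
    positivity
  have hsum_perm (i : Fin m) : ∑ σ : Equiv.Perm (Fin n), Φ (fun j => x (σ (blk i j))) =
      (n.factorial / n.descFactorial k : ℝ) * ∑ e : Fin k ↪ Fin n, Φ (fun j => x (e j)) := by
    have := MulAction.card_nsmul_sum_smul (G := Equiv.Perm (Fin n))
      (fun e : Fin k ↪ Fin n => Φ (fun j => x (e j))) (blk i)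
    simp only [Fintype.card_embedding_eq, Fintype.card_perm, Fintype.card_fin, nsmul_eq_mul,
      Function.Embedding.smul_apply, Equiv.Perm.smul_def] at this
    field_simp
    linarith
  rw [← Finset.mul_sum, Finset.sum_comm]
  simp only [hsum_perm, Finset.sum_const, Finset.card_univ, Fintype.card_fin, nsmul_eq_mul, UStat]
  field_simp

theorem Real.exp_average_le {ι : Type*} [Fintype ι] [Nonempty ι] (a : ι → ℝ) :
    exp ((Fintype.card ι : ℝ)⁻¹ * ∑ i, a i) ≤ (Fintype.card ι : ℝ)⁻¹ * ∑ i, exp (a i) := by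
  have hw : ∑ _i : ι, (Fintype.card ι : ℝ)⁻¹ = 1 := by simp
  simpa [Finset.mul_sum] using convexOn_exp.map_sum_le (t := Finset.univ)
    (fun _ _ => by positivity) hw (fun i _ => Set.mem_univ (a i))

theorem exp_mul_UStat_le {S : Type*} {k n m : ℕ} (hm : m ≠ 0) (B : Fin m × Fin k ↪ Fin n)
    (Φ : (Fin k → S) → ℝ) (x : ℕ → S) (t : ℝ) :
    exp (t * UStat k n Φ x) ≤ (n.factorial : ℝ)⁻¹ *
      ∑ σ : Equiv.Perm (Fin n), ∏ i, exp (t / m * Φ fun j => x (σ (B (i, j)))) := by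
  have hcard : (Fintype.card (Equiv.Perm (Fin n)) : ℝ) = n.factorial := by
    rw [Fintype.card_perm, Fintype.card_fin]
  have hU : t * UStat k n Φ x = (Fintype.card (Equiv.Perm (Fin n)) : ℝ)⁻¹ *
      ∑ σ : Equiv.Perm (Fin n), ∑ i, t / m * Φ fun j => x (σ (B (i, j))) := by
    rw [UStat_eq_average_perm hm (fun i => (Function.Embedding.sectR i (Fin k)).trans B), hcard]
    simp only [Finset.mul_sum, Function.Embedding.trans_apply, Function.Embedding.sectR_apply]
    refine Finset.sum_congr rfl fun σ _ => Finset.sum_congr rfl fun i _ => ?_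
    ring
  rw [hU]
  simpa only [hcard, Real.exp_sum] using
    Real.exp_average_le fun σ : Equiv.Perm (Fin n) => ∑ i, t / m * Φ fun j => x (σ (B (i, j)))

theorem abs_UStat_sub_le {S : Type*} {k n : ℕ} (Φ Ψ : (Fin k → S) → ℝ) (x : ℕ → S) :
    |UStat k n Φ x - UStat k n Ψ x| ≤ UStat k n (fun y => |Φ y - Ψ y|) x := by
  simp only [UStat, ← mul_sub, ← Finset.sum_sub_distrib, abs_mul, abs_inv, Nat.abs_cast]
  gcongr
  exact Finset.abs_sum_le_sum_abs _ _

theorem measurable_UStat {Ω S : Type*} [MeasurableSpace Ω] [MeasurableSpace S] {k n : ℕ}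
    {Φ : (Fin k → S) → ℝ} (hΦ : Measurable Φ) {X : ℕ → Ω → S} (hX : ∀ i, Measurable (X i)) :
    Measurable fun ω => UStat k n Φ fun i => X i ω :=
  (Finset.measurable_sum _ fun _ _ => hΦ.comp (measurable_pi_lambda _ fun _ => hX _)).const_mul _

theorem two_le_Cdec {k : ℕ} (hk : 1 ≤ k) : 2 ≤ Cdec k := by
  unfold Cdec
  split_ifs
  · norm_num
  · have hprod : 1 ≤ ∏ j ∈ Finset.Icc 2 k, ((j : ℝ) ^ j - 1) := by
      refine Finset.one_le_prod fun j hj => ?_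
      have hj2 : 2 ≤ j := (Finset.mem_Icc.1 hj).1
      have hj2' : (2 : ℝ) ≤ j := by exact_mod_cast hj2
      have : (j : ℝ) ≤ (j : ℝ) ^ j := le_self_pow₀ (by linarith) (by omega)
      linarith
    have hpow : (2 : ℝ) ≤ 2 ^ k := le_self_pow₀ one_le_two (by omega)
    nlinarith

theorem cast_div_div_le_mul_Cdec {k n : ℕ} (hk : 1 ≤ k) (hkn : k ≤ n) :
    (n : ℝ) / (n / k : ℕ) ≤ k * Cdec k := by
  have hm : 0 < n / k := Nat.div_pos hkn hk
  have hn : n ≤ 2 * (n / k) * k := by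
    have := Nat.lt_div_mul_add (a := n) hk
    have := Nat.le_mul_of_pos_left k hm
    linarith
  rw [div_le_iff₀ (by exact_mod_cast hm)]
  have hn' : (n : ℝ) ≤ 2 * (n / k : ℕ) * k := by exact_mod_cast hn
  nlinarith [two_le_Cdec hk, (Nat.cast_pos.2 hm : (0 : ℝ) < (n / k : ℕ)),
    (Nat.cast_pos.2 (by omega : 0 < k) : (0 : ℝ) < k)]

section Blocks

variable {Ω S ι κ : Type*} [MeasurableSpace Ω] [MeasurableSpace S] {μ : Measure Ω}
  {α : Measure S} {X : ι → Ω → S}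

theorem map_subfamily_eq_pi [Fintype κ] (hmeas : ∀ i, Measurable (X i))
    (hindep : iIndepFun X μ) (hlaw : ∀ i, μ.map (X i) = α) {g : κ → ι}
    (hg : Function.Injective g) :
    μ.map (fun ω j => X (g j) ω) = Measure.pi fun _ => α := by
  rw [(hindep.precomp hg).map_fun_eq_pi_map fun j => (hmeas _).aemeasurable]
  simp only [hlaw]

theorem lintegral_comp_subfamily [Fintype κ] (hmeas : ∀ i, Measurable (X i))
    (hindep : iIndepFun X μ) (hlaw : ∀ i, μ.map (X i) = α) {g : κ → ι}
    (hg : Function.Injective g) {f : (κ → S) → ℝ≥0∞} (hf : Measurable f) :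
    ∫⁻ ω, f (fun j => X (g j) ω) ∂μ = ∫⁻ y, f y ∂Measure.pi fun _ => α := by
  rw [← map_subfamily_eq_pi hmeas hindep hlaw hg,
    lintegral_map hf (measurable_pi_lambda _ fun j => hmeas (g j))]

theorem iIndepFun_blocks {β : Type*} [Fintype κ] [Fintype β] [IsProbabilityMeasure α]
    (hmeas : ∀ i, Measurable (X i))
    (hindep : iIndepFun X μ) (hlaw : ∀ i, μ.map (X i) = α) {B : κ × β → ι}
    (hB : Function.Injective B) :
    iIndepFun (fun i ω j => X (B (i, j)) ω) μ := by
  have := hindep.isProbabilityMeasure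
  have hblock (i : κ) : μ.map (fun ω j => X (B (i, j)) ω) = Measure.pi fun _ => α :=
    map_subfamily_eq_pi hmeas hindep hlaw (hB.comp (Prod.mk_right_injective i))
  rw [iIndepFun_iff_map_fun_eq_pi_map fun i =>
    (measurable_pi_lambda _ fun j => hmeas (B (i, j))).aemeasurable]
  simp only [hblock]
  have hcurry : (fun ω i j => X (B (i, j)) ω) =
      MeasurableEquiv.curry κ β S ∘ fun ω p => X (B p) ω := rfl
  rw [hcurry, ← Measure.map_map (MeasurableEquiv.measurable _)
    (measurable_pi_lambda _ fun p => hmeas (B p)), map_subfamily_eq_pi hmeas hindep hlaw hB,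
    ← Measure.infinitePi_eq_pi, Measure.infinitePi_map_curry (fun _ _ => α)]
  simp only [Measure.infinitePi_eq_pi]

theorem lintegral_prod_blocks {β : Type*} [Fintype κ] [Fintype β] [IsProbabilityMeasure α]
    (hmeas : ∀ i, Measurable (X i))
    (hindep : iIndepFun X μ) (hlaw : ∀ i, μ.map (X i) = α) {B : κ × β → ι}
    (hB : Function.Injective B) {f : (β → S) → ℝ≥0∞} (hf : Measurable f) :
    ∫⁻ ω, ∏ i, f (fun j => X (B (i, j)) ω) ∂μ =
      (∫⁻ y, f y ∂Measure.pi fun _ => α) ^ Fintype.card κ := by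
  have hrow (i : κ) : Function.Injective fun j => B (i, j) := hB.comp (Prod.mk_right_injective i)
  rw [lintegral_prod_eq_prod_lintegral_of_indepFun Finset.univ
    (fun i ω => f (fun j => X (B (i, j)) ω))
    ((iIndepFun_blocks hmeas hindep hlaw hB).comp (fun _ => f) fun _ => hf)
    fun i => hf.comp (measurable_pi_lambda _ fun j => hmeas (B (i, j))),
    Finset.prod_congr rfl fun i _ => lintegral_comp_subfamily hmeas hindep hlaw (hrow i) hf,
    Finset.prod_const, Finset.card_univ]

end Blocks

section Hoeffding

variable {Ω S : Type*} [MeasurableSpace Ω] [MeasurableSpace S] {μ : Measure Ω}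
  {α : Measure S} [IsProbabilityMeasure α] {X : ℕ → Ω → S}

theorem lintegral_exp_mul_UStat_le (hmeas : ∀ i, Measurable (X i)) (hindep : iIndepFun X μ)
    (hlaw : ∀ i, μ.map (X i) = α) {k n m : ℕ} (hm : m ≠ 0) (B : Fin m × Fin k ↪ Fin n)
    {Φ : (Fin k → S) → ℝ} (hΦ : Measurable Φ) (t : ℝ) :
    ∫⁻ ω, ENNReal.ofReal (exp (t * UStat k n Φ fun i => X i ω)) ∂μ ≤
      (∫⁻ y, ENNReal.ofReal (exp (t / m * Φ y)) ∂Measure.pi fun _ => α) ^ m := by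
  set g : (Fin k → S) → ℝ≥0∞ := fun y => ENNReal.ofReal (exp (t / m * Φ y))
  have hg : Measurable g := (hΦ.const_mul _).exp.ennreal_ofReal
  have hpoint (ω : Ω) : ENNReal.ofReal (exp (t * UStat k n Φ fun i => X i ω)) ≤
      ENNReal.ofReal (n.factorial : ℝ)⁻¹ *
        ∑ σ : Equiv.Perm (Fin n), ∏ i, g fun j => X (σ (B (i, j))) ω := by
    refine (ENNReal.ofReal_le_ofReal (exp_mul_UStat_le hm B Φ _ t)).trans_eq ?_
    rw [ENNReal.ofReal_mul (by positivity),
      ENNReal.ofReal_sum_of_nonneg fun _ _ => Finset.prod_nonneg fun _ _ => (exp_pos _).le]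
    simp only [ENNReal.ofReal_prod_of_nonneg fun _ _ => (exp_pos _).le, g]
  have hblock (σ : Equiv.Perm (Fin n)) :
      ∫⁻ ω, ∏ i, g (fun j => X (σ (B (i, j))) ω) ∂μ = (∫⁻ y, g y ∂Measure.pi fun _ => α) ^ m := by
    simpa using lintegral_prod_blocks hmeas hindep hlaw
      (B := fun p => (σ (B p) : ℕ)) (Fin.val_injective.comp (σ.injective.comp B.injective)) hg
  have hmeasσ (σ : Equiv.Perm (Fin n)) :
      Measurable fun ω => ∏ i, g (fun j => X (σ (B (i, j))) ω) :=
    Finset.measurable_prod _ fun i _ => hg.comp (measurable_pi_lambda _ fun j => hmeas _)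
  calc ∫⁻ ω, ENNReal.ofReal (exp (t * UStat k n Φ fun i => X i ω)) ∂μ
      ≤ ∫⁻ ω, ENNReal.ofReal (n.factorial : ℝ)⁻¹ *
          ∑ σ : Equiv.Perm (Fin n), ∏ i, g (fun j => X (σ (B (i, j))) ω) ∂μ :=
        lintegral_mono hpoint
    _ = (∫⁻ y, g y ∂Measure.pi fun _ => α) ^ m := by
      rw [lintegral_const_mul _ (Finset.measurable_sum _ fun σ _ => hmeasσ σ),
        lintegral_finsetSum _ fun σ _ => hmeasσ σ]
      simp only [hblock, Finset.sum_const, Finset.card_univ, Fintype.card_perm,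
        Fintype.card_fin, nsmul_eq_mul, ← mul_assoc]
      rw [ENNReal.ofReal_inv_of_pos (by positivity), ENNReal.ofReal_natCast,
        ENNReal.inv_mul_cancel (by simp [Nat.factorial_ne_zero]) (ENNReal.natCast_ne_top _),
        one_mul]

theorem lintegral_exp_mul_UStat_le_of_integrable (hmeas : ∀ i, Measurable (X i))
    (hindep : iIndepFun X μ) (hlaw : ∀ i, μ.map (X i) = α) {k n m : ℕ} (hm : m ≠ 0)
    (B : Fin m × Fin k ↪ Fin n) {Φ : (Fin k → S) → ℝ} (hΦ : Measurable Φ) (hΦ0 : ∀ y, 0 ≤ Φ y)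
    {t c : ℝ} (htc : t / m ≤ c) (hint : Integrable (fun ω => exp (c * Φ fun j => X j ω)) μ) :
    ∫⁻ ω, ENNReal.ofReal (exp (t * UStat k n Φ fun i => X i ω)) ∂μ ≤
      ENNReal.ofReal (∫ ω, exp (c * Φ fun j => X j ω) ∂μ) ^ m := by
  refine (lintegral_exp_mul_UStat_le hmeas hindep hlaw hm B hΦ t).trans (pow_le_pow_left' ?_ m)
  rw [ofReal_integral_eq_lintegral_ofReal hint (ae_of_all _ fun _ => (exp_pos _).le),
    ← lintegral_comp_subfamily hmeas hindep hlaw Fin.val_injective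
      (hΦ.const_mul _).exp.ennreal_ofReal]
  exact lintegral_mono fun y =>
    ENNReal.ofReal_le_ofReal (exp_le_exp.2 (mul_le_mul_of_nonneg_right htc (hΦ0 _)))

end Hoeffding

theorem measure_lt_mul_exp_le_lintegral {Ω : Type*} [MeasurableSpace Ω] {μ : Measure Ω}
    {Z : Ω → ℝ} (hZ : Measurable Z) {t : ℝ} (ht : 0 ≤ t) (δ : ℝ) :
    μ {ω | δ < Z ω} * ENNReal.ofReal (exp (t * δ)) ≤
      ∫⁻ ω, ENNReal.ofReal (exp (t * Z ω)) ∂μ := by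
  rw [mul_comm]
  refine (mul_le_mul_right (measure_mono fun ω (hω : δ < Z ω) => ?_) _).trans
    (mul_meas_ge_le_lintegral₀ (hZ.const_mul t).exp.ennreal_ofReal.aemeasurable _)
  exact ENNReal.ofReal_le_ofReal (exp_le_exp.2 (mul_le_mul_of_nonneg_left hω.le ht))

theorem inv_mul_log_le_of_mul_exp_le {p : ℝ≥0∞} {k m n : ℕ} {a M : ℝ} (hk : 0 < k) (hn : 0 < n)
    (hmk : m * k ≤ n) (hM : 1 ≤ M)
    (hp : p * ENNReal.ofReal (exp (n * a)) ≤ ENNReal.ofReal M ^ m) :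
    (((n : ℝ)⁻¹ : ℝ) : EReal) * ENNReal.log p ≤ ((-a + (k : ℝ)⁻¹ * log M : ℝ) : EReal) := by
  rcases eq_or_ne p 0 with rfl | hp0
  · rw [ENNReal.log_zero, EReal.coe_mul_bot_of_pos (by positivity)]
    exact bot_le
  have hptop : p ≠ ⊤ := by
    rintro rfl
    have := hp.trans_lt (ENNReal.pow_lt_top ENNReal.ofReal_lt_top)
    rw [ENNReal.top_mul (ENNReal.ofReal_pos.2 (exp_pos _)).ne'] at this
    exact lt_irrefl _ this
  rw [ENNReal.log_pos_real hp0 hptop, ← EReal.coe_mul, EReal.coe_le_coe_iff]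
  have hpos : 0 < p.toReal := ENNReal.toReal_pos hp0 hptop
  have hreal : p.toReal * exp (n * a) ≤ M ^ m := by
    rw [← ENNReal.ofReal_pow (by linarith), ← ENNReal.ofReal_toReal hptop,
      ← ENNReal.ofReal_mul hpos.le] at hp
    exact (ENNReal.ofReal_le_ofReal_iff (by positivity)).1 hp
  have hlog : log p.toReal + n * a ≤ m * log M := by
    rw [← log_exp (n * a), ← log_mul hpos.ne' (exp_pos _).ne', ← log_pow]
    exact log_le_log (by positivity) hreal
  have hmn : (m : ℝ) / n ≤ (k : ℝ)⁻¹ := by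
    rw [div_le_iff₀ (by positivity), inv_mul_eq_div, le_div_iff₀ (by positivity)]
    exact_mod_cast hmk
  have hlogM : 0 ≤ log M := log_nonneg hM
  calc (n : ℝ)⁻¹ * log p.toReal ≤ (n : ℝ)⁻¹ * (m * log M - n * a) := by gcongr; linarith
    _ = -a + (m / n) * log M := by field_simp; ring
    _ ≤ -a + (k : ℝ)⁻¹ * log M := by gcongr

theorem ustat_diff_exp_bound_general {Ω S : Type*} [MeasurableSpace Ω] [MeasurableSpace S]
    (μ : Measure Ω) [IsProbabilityMeasure μ] (α : Measure S)
    (X : ℕ → Ω → S) (hmeas : ∀ i, Measurable (X i))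
    (hindep : iIndepFun X μ)
    (hlaw : ∀ i, Measure.map (X i) μ = α)
    (k : ℕ) (hk : 2 ≤ k) (W W' : (Fin k → S) → ℝ)
    (hWmeas : Measurable W) (hW'meas : Measurable W')
    (hexp : ∀ lam : ℝ, 0 < lam →
      Integrable (fun ω => exp (lam * |W (fun j => X j ω) - W' (fun j => X j ω)|)) μ)
    (n : ℕ) (hn : k ≤ n) (δ lam : ℝ) (hlam : 0 < lam) :
    (((n : ℝ)⁻¹ : ℝ) : EReal) * ENNReal.log
        (μ {ω | δ < |UStat k n W (fun i => X i ω) - UStat k n W' (fun i => X i ω)|})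
      ≤ ((-lam * δ + (k : ℝ)⁻¹ *
          log (∫ ω, exp (k * Cdec k * lam *
            |W (fun j => X j ω) - W' (fun j => X j ω)|) ∂μ) : ℝ) : EReal) := by
  have : IsProbabilityMeasure α := hlaw 0 ▸ Measure.isProbabilityMeasure_map (hmeas 0).aemeasurable
  have hΦ : Measurable fun y => |W y - W' y| := (hWmeas.sub hW'meas).abs
  have hc : 0 < k * Cdec k * lam := by have := two_le_Cdec (by omega : 1 ≤ k); positivity
  have hM : 1 ≤ ∫ ω, exp (k * Cdec k * lam * |W (fun j => X j ω) - W' (fun j => X j ω)|) ∂μ := by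
    simpa using integral_mono (integrable_const 1) (hexp _ hc) fun ω => one_le_exp (by positivity)
  have htc : n * lam / (n / k : ℕ) ≤ k * Cdec k * lam := by
    rw [mul_div_right_comm]
    exact mul_le_mul_of_nonneg_right (cast_div_div_le_mul_Cdec (by omega) hn) hlam.le
  have hmk : n / k * k ≤ n := Nat.div_mul_le_self n k
  rw [neg_mul]
  refine inv_mul_log_le_of_mul_exp_le (by omega) (by omega) hmk hM ?_
  calc _ ≤ μ {ω | δ < UStat k n (fun y => |W y - W' y|) fun i => X i ω} *
          ENNReal.ofReal (exp (n * lam * δ)) := by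
        rw [← mul_assoc]
        gcongr
        exact abs_UStat_sub_le W W' _
    _ ≤ ∫⁻ ω, ENNReal.ofReal (exp (n * lam * UStat k n (fun y => |W y - W' y|) fun i => X i ω))
          ∂μ :=
        measure_lt_mul_exp_le_lintegral (measurable_UStat hΦ hmeas) (by positivity) δ
    _ ≤ _ := lintegral_exp_mul_UStat_le_of_integrable hmeas hindep hlaw
        (Nat.div_pos hn (by omega)).ne' (finProdFinEquiv.toEmbedding.trans (Fin.castLEEmb hmk))
        hΦ (fun _ => abs_nonneg _) htc (hexp _ hc)

/-- Exponential Chebyshev bound for the difference of two `U`-statistics: if `X₁, X₂, …`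
are i.i.d. with law `α` and `W, W'` are symmetric measurable kernels with
`E[exp(λ|W - W'|(X₁,…,X_k))] < ∞` for all `λ > 0`, then for all `δ, λ > 0` and `n ≥ k`,
`(1/n) log P{|U_n(W) - U_n(W')| > δ}
  ≤ -λδ + (1/k) log E[exp(k C_k λ |W - W'|(X₁,…,X_k))]`. -/
theorem ustat_diff_exp_bound {Ω S : Type*} [MeasurableSpace Ω] [MeasurableSpace S]
    (μ : Measure Ω) [IsProbabilityMeasure μ] (α : Measure S)
    (X : ℕ → Ω → S) (hmeas : ∀ i, Measurable (X i))
    (hindep : iIndepFun X μ)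
    (hlaw : ∀ i, Measure.map (X i) μ = α)
    (k : ℕ) (hk : 2 ≤ k) (W W' : (Fin k → S) → ℝ)
    (hWmeas : Measurable W) (hW'meas : Measurable W')
    (hsymm : ∀ (σ : Equiv.Perm (Fin k)) (y : Fin k → S), W (y ∘ σ) = W y)
    (hsymm' : ∀ (σ : Equiv.Perm (Fin k)) (y : Fin k → S), W' (y ∘ σ) = W' y)
    (hexp : ∀ lam : ℝ, 0 < lam →
      Integrable (fun ω => exp (lam * |W (fun j => X j ω) - W' (fun j => X j ω)|)) μ)
    (n : ℕ) (hn : k ≤ n) (δ lam : ℝ) (hδ : 0 < δ) (hlam : 0 < lam) :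
    (((n : ℝ)⁻¹ : ℝ) : EReal) * ENNReal.log
        (μ {ω | δ < |UStat k n W (fun i => X i ω) - UStat k n W' (fun i => X i ω)|})
      ≤ ((-lam * δ + (k : ℝ)⁻¹ *
          log (∫ ω, exp (k * Cdec k * lam *
            |W (fun j => X j ω) - W' (fun j => X j ω)|) ∂μ) : ℝ) : EReal) :=
  ustat_diff_exp_bound_general μ α X hmeas hindep hlaw k hk W W' hWmeas hW'meas hexp n hn δ lam hlam
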